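/- Let G = (V,E) be a finite simple connected graph with N vertices and at least one edge, and n ≥ 1 an integer. Define U(K) = Z̃_n(u_1(K),...,u_n(K)) and V(K) = Z̃_n(u_1^*(K),...,u_n^*(K)) for K ∈ (0,∞), and let d : (0,∞) → (0,∞) be the unique function with V(K) = U(d(K)) for all K > 0. Then there exists a unique K_0 > 0 with d(K_0) = K_0, and K_0 is characterized by the equation U(K_0) = V(K_0). -/

import Mathlib

open Finset Real Filter

/-- Number of replicas (out of `n`) in which the spins at `i` and `j` are antiparallel. -/
def antiCount {V : Type*} (n : ℕ) (S : V → Fin n → Bool) (i j : V) : ℕ :=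
  (Finset.univ.filter fun a : Fin n => S i a ≠ S j a).card

theorem antiCount_symm {V : Type*} (n : ℕ) (S : V → Fin n → Bool) (i j : V) :
    antiCount n S i j = antiCount n S j i := by
  unfold antiCount
  congr 1
  apply Finset.filter_congr
  intro a _
  exact ne_comm

/-- The normalized replicated partition function
`Z̃_n(u) = Σ_S Π_{{i,j} ∈ E} u_{k(S,{i,j})}`, where the sum runs over all spin
configurations `S : V → {-1,+1}^n`, `k(S,{i,j})` is the number of replicas in which
the spins at `i` and `j` are antiparallel, and `u : ℕ → ℝ` gives the normalized
edge Boltzmann factors (with the convention `u 0 = 1`). -/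
noncomputable def Ztilde {V : Type*} [Fintype V] [DecidableEq V] (G : SimpleGraph V)
    [DecidableRel G.Adj] (n : ℕ) (u : ℕ → ℝ) : ℝ :=
  ∑ S : V → Fin n → Bool, ∏ e ∈ G.edgeFinset,
    Sym2.lift ⟨fun i j => u (antiCount n S i j),
      fun i j => congrArg u (antiCount_symm n S i j)⟩ e

/-- The normalized edge Boltzmann factor on the Nishimori line,
`u_k(K) = cosh((n+1-2k)K) / cosh((n+1)K)` (note `u_0(K) = 1`). -/
noncomputable def uNL (n k : ℕ) (K : ℝ) : ℝ :=
  cosh (((n : ℝ) + 1 - 2 * k) * K) / cosh (((n : ℝ) + 1) * K)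

/-- The normalized dual edge Boltzmann factor on the Nishimori line:
`u_k^*(K) = (tanh K)^{k+1}` for `k` odd and `(tanh K)^k` for `k` even
(note `u_0^*(K) = 1`). -/
noncomputable def uStarNL (k : ℕ) (K : ℝ) : ℝ :=
  if Odd k then (tanh K) ^ (k + 1) else (tanh K) ^ k

/-- `U(K) = Z̃_n(u_1(K),…,u_n(K))` on the Nishimori line. -/
noncomputable def Ufun {V : Type*} [Fintype V] [DecidableEq V] (G : SimpleGraph V)
    [DecidableRel G.Adj] (n : ℕ) (K : ℝ) : ℝ :=
  Ztilde G n (fun k => uNL n k K)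

/-- `V(K) = Z̃_n(u_1^*(K),…,u_n^*(K))` on the Nishimori line. -/
noncomputable def Vfun {V : Type*} [Fintype V] [DecidableEq V] (G : SimpleGraph V)
    [DecidableRel G.Adj] (n : ℕ) (K : ℝ) : ℝ :=
  Ztilde G n (fun k => uStarNL k K)

/-! ### Auxiliary material -/

open Topology

namespace NishimoriAux

/-- Exponent of the dual factor. -/
def ex (k : ℕ) : ℕ := if Odd k then k + 1 else k

lemma uStarNL_eq (k : ℕ) (K : ℝ) : uStarNL k K = tanh K ^ ex k := by
  unfold uStarNL ex
  split <;> rfl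

lemma ex_pos {k : ℕ} (hk : 1 ≤ k) : 1 ≤ ex k := by
  unfold ex; split <;> omega

lemma ex_zero : ex 0 = 0 := rfl

/-- The anticount attached to an edge, as a function on `Sym2 V`. -/
def edgeK {V : Type*} (n : ℕ) (S : V → Fin n → Bool) (e : Sym2 V) : ℕ :=
  Sym2.lift ⟨fun i j => antiCount n S i j, fun i j => antiCount_symm n S i j⟩ e

lemma edgeK_mk {V : Type*} (n : ℕ) (S : V → Fin n → Bool) (i j : V) :
    edgeK n S s(i, j) = antiCount n S i j := rfl

lemma edgeK_le {V : Type*} (n : ℕ) (S : V → Fin n → Bool) (e : Sym2 V) :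
    edgeK n S e ≤ n := by
  induction e using Sym2.ind with
  | _ i j =>
    rw [edgeK_mk]
    calc antiCount n S i j ≤ Finset.univ.card := Finset.card_filter_le _ _
      _ = n := by simp

lemma Ztilde_eq {V : Type*} [Fintype V] [DecidableEq V] (G : SimpleGraph V)
    [DecidableRel G.Adj] (n : ℕ) (u : ℕ → ℝ) :
    Ztilde G n u = ∑ S : V → Fin n → Bool, ∏ e ∈ G.edgeFinset, u (edgeK n S e) := by
  unfold Ztilde
  refine Finset.sum_congr rfl fun S _ => Finset.prod_congr rfl fun e _ => ?_
  induction e using Sym2.ind with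
  | _ i j => rfl

/-- The key strict comparison between two replicated sums. -/
lemma sum_lt {V : Type*} [Fintype V] [DecidableEq V] (G : SimpleGraph V)
    [DecidableRel G.Adj] {n : ℕ} (hn : 1 ≤ n) {i j : V} (hij : G.Adj i j)
    {u w : ℕ → ℝ} (hw0 : ∀ k, k ≤ n → 0 ≤ w k) (hle : ∀ k, k ≤ n → w k ≤ u k)
    (hupos : ∀ k, k ≤ n → 0 < u k) (hlt : w n < u n) :
    (∑ S : V → Fin n → Bool, ∏ e ∈ G.edgeFinset, w (edgeK n S e)) <
      ∑ S : V → Fin n → Bool, ∏ e ∈ G.edgeFinset, u (edgeK n S e) := by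
  have hedge : s(i, j) ∈ G.edgeFinset := by
    rw [SimpleGraph.mem_edgeFinset, SimpleGraph.mem_edgeSet]; exact hij
  apply Finset.sum_lt_sum
  · intro S _
    exact Finset.prod_le_prod (fun e _ => hw0 _ (edgeK_le n S e))
      (fun e _ => hle _ (edgeK_le n S e))
  · refine ⟨fun v _ => decide (v = i), Finset.mem_univ _, ?_⟩
    set S : V → Fin n → Bool := fun v _ => decide (v = i) with hS
    have hK : edgeK n S s(i, j) = n := by
      rw [edgeK_mk]
      unfold antiCount
      rw [Finset.filter_true_of_mem]
      · simp
      · intro a _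
        simp [hS, hij.ne']
    rw [← Finset.mul_prod_erase _ _ hedge, ← Finset.mul_prod_erase _ _ hedge, hK]
    have hPle : (∏ e ∈ G.edgeFinset.erase s(i, j), w (edgeK n S e)) ≤
        ∏ e ∈ G.edgeFinset.erase s(i, j), u (edgeK n S e) :=
      Finset.prod_le_prod (fun e _ => hw0 _ (edgeK_le n S e))
        (fun e _ => hle _ (edgeK_le n S e))
    have hPpos : 0 < ∏ e ∈ G.edgeFinset.erase s(i, j), u (edgeK n S e) :=
      Finset.prod_pos fun e _ => hupos _ (edgeK_le n S e)
    calc w n * ∏ e ∈ G.edgeFinset.erase s(i, j), w (edgeK n S e)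
        ≤ w n * ∏ e ∈ G.edgeFinset.erase s(i, j), u (edgeK n S e) :=
          mul_le_mul_of_nonneg_left hPle (hw0 n le_rfl)
      _ < u n * ∏ e ∈ G.edgeFinset.erase s(i, j), u (edgeK n S e) :=
          mul_lt_mul_of_pos_right hlt hPpos

/-! ### The cosh-ratio function -/

lemma cosh_mul_abs {c : ℝ} {K : ℝ} (hK : 0 ≤ K) : cosh (|c| * K) = cosh (c * K) := by
  rw [show |c| * K = |c * K| by rw [abs_mul, abs_of_nonneg hK], Real.cosh_abs]

lemma sinh_mul_self (c K : ℝ) : |c| * sinh (|c| * K) = c * sinh (c * K) := by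
  rcases le_or_gt 0 c with h | h
  · rw [abs_of_nonneg h]
  · rw [abs_of_neg h, show -c * K = -(c * K) by ring, Real.sinh_neg]
    ring

lemma coshRatio_num_neg {a b K : ℝ} (ha : 0 ≤ a) (hab : a < b) (hK : 0 < K) :
    a * sinh (a * K) * cosh (b * K) < b * sinh (b * K) * cosh (a * K) := by
  have h1 : sinh (a * K) * cosh (b * K) - cosh (a * K) * sinh (b * K)
      = sinh (a * K - b * K) := (Real.sinh_sub _ _).symm
  have h2 : sinh (a * K - b * K) < 0 := by
    rw [Real.sinh_neg_iff]
    nlinarith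
  have h3 : 0 < sinh (b * K) := by
    rw [Real.sinh_pos_iff]
    nlinarith
  have h4 : 0 < cosh (a * K) := Real.cosh_pos _
  have h5 : a * (sinh (a * K) * cosh (b * K)) ≤ a * (cosh (a * K) * sinh (b * K)) :=
    mul_le_mul_of_nonneg_left (by linarith) ha
  have h6 : a * (cosh (a * K) * sinh (b * K)) < b * (cosh (a * K) * sinh (b * K)) :=
    mul_lt_mul_of_pos_right hab (mul_pos h4 h3)
  nlinarith

lemma coshRatio_hasDeriv (c b K : ℝ) :
    HasDerivAt (fun K => cosh (c * K) / cosh (b * K))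
      ((sinh (c * K) * c * cosh (b * K) - cosh (c * K) * (sinh (b * K) * b)) /
        cosh (b * K) ^ 2) K := by
  have h1 : HasDerivAt (fun K : ℝ => cosh (c * K)) (sinh (c * K) * c) K := by
    have := (Real.hasDerivAt_cosh (c * K)).comp K ((hasDerivAt_id K).const_mul c)
    simpa [Function.comp_def, mul_comm] using this
  have h2 : HasDerivAt (fun K : ℝ => cosh (b * K)) (sinh (b * K) * b) K := by
    have := (Real.hasDerivAt_cosh (b * K)).comp K ((hasDerivAt_id K).const_mul b)
    simpa [Function.comp_def, mul_comm] using this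
  exact h1.div h2 (Real.cosh_pos _).ne'

lemma coshRatio_continuous (c b : ℝ) :
    Continuous fun K : ℝ => cosh (c * K) / cosh (b * K) :=
  (Real.continuous_cosh.comp (continuous_const.mul continuous_id)).div
    (Real.continuous_cosh.comp (continuous_const.mul continuous_id))
    fun _ => (Real.cosh_pos _).ne'

lemma coshRatio_strictAntiOn {c b : ℝ} (h : |c| < b) :
    StrictAntiOn (fun K => cosh (c * K) / cosh (b * K)) (Set.Ici 0) := by
  apply strictAntiOn_of_deriv_neg (convex_Ici 0) (coshRatio_continuous c b).continuousOn
  intro K hK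
  rw [interior_Ici] at hK
  rw [(coshRatio_hasDeriv c b K).deriv]
  apply div_neg_of_neg_of_pos _ (by positivity)
  have key := coshRatio_num_neg (abs_nonneg c) h hK
  have e1 : cosh (c * K) = cosh (|c| * K) := (cosh_mul_abs hK.le).symm
  have e2 : sinh (c * K) * c = |c| * sinh (|c| * K) := by rw [sinh_mul_self]; ring
  rw [e1, e2]
  nlinarith

lemma cosh_le_exp_of_nonneg {x : ℝ} (hx : 0 ≤ x) : cosh x ≤ exp x := by
  have h := Real.exp_le_exp.2 (neg_le_self hx)
  rw [Real.cosh_eq]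
  linarith

lemma exp_le_two_cosh (x : ℝ) : exp x ≤ 2 * cosh x := by
  have := Real.exp_pos (-x)
  rw [Real.cosh_eq]
  linarith

lemma coshRatio_tendsto_zero {c b : ℝ} (h : |c| < b) :
    Tendsto (fun K => cosh (c * K) / cosh (b * K)) atTop (𝓝 0) := by
  have hbnd : Tendsto (fun K : ℝ => 2 * exp ((|c| - b) * K)) atTop (𝓝 (2 * 0)) := by
    apply Filter.Tendsto.const_mul
    apply Real.tendsto_exp_atBot.comp
    exact (tendsto_const_mul_atBot_of_neg (by linarith)).2 tendsto_id
  rw [mul_zero] at hbnd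
  apply squeeze_zero' ?_ ?_ hbnd
  · filter_upwards with K
    positivity
  · filter_upwards [eventually_ge_atTop (0 : ℝ)] with K hK
    have e1 : cosh (c * K) = cosh (|c| * K) := (cosh_mul_abs hK).symm
    have h2 : cosh (|c| * K) ≤ exp (|c| * K) := cosh_le_exp_of_nonneg (by positivity)
    have h3 : exp (b * K) / 2 ≤ cosh (b * K) := by
      have := exp_le_two_cosh (b * K)
      linarith
    have h4 : (0 : ℝ) < exp (b * K) / 2 := by positivity
    calc cosh (c * K) / cosh (b * K) ≤ exp (|c| * K) / (exp (b * K) / 2) := by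
          rw [e1]
          exact div_le_div₀ (Real.exp_pos _).le h2 h4 h3
      _ = 2 * exp ((|c| - b) * K) := by
          rw [sub_mul, Real.exp_sub]
          field_simp

/-! ### Properties of `uNL` -/

lemma uNL_def (n k : ℕ) :
    uNL n k = fun K => cosh (((n : ℝ) + 1 - 2 * k) * K) / cosh (((n : ℝ) + 1) * K) := rfl

lemma uNL_pos (n k : ℕ) (K : ℝ) : 0 < uNL n k K :=
  div_pos (Real.cosh_pos _) (Real.cosh_pos _)

lemma uNL_zero (n k : ℕ) : uNL n k 0 = 1 := by
  simp [uNL]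

lemma uNL_k0 (n : ℕ) (K : ℝ) : uNL n 0 K = 1 := by
  unfold uNL
  norm_num
  exact (Real.cosh_pos _).ne'

lemma uNL_abs_lt {n k : ℕ} (h1 : 1 ≤ k) (h2 : k ≤ n) :
    |((n : ℝ) + 1 - 2 * k)| < (n : ℝ) + 1 := by
  have hk1 : (1 : ℝ) ≤ (k : ℝ) := by exact_mod_cast h1
  have hkn : (k : ℝ) ≤ (n : ℝ) := by exact_mod_cast h2
  rw [abs_lt]
  constructor <;> linarith

lemma uNL_strictAntiOn {n k : ℕ} (h1 : 1 ≤ k) (h2 : k ≤ n) :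
    StrictAntiOn (uNL n k) (Set.Ici 0) := by
  rw [uNL_def]
  exact coshRatio_strictAntiOn (uNL_abs_lt h1 h2)

lemma uNL_antitoneOn {n k : ℕ} (h2 : k ≤ n) : AntitoneOn (uNL n k) (Set.Ici 0) := by
  rcases Nat.eq_zero_or_pos k with rfl | hk
  · intro a _ b _ _
    rw [uNL_k0, uNL_k0]
  · exact (uNL_strictAntiOn hk h2).antitoneOn

/-- The limiting factor at `K = ∞` (and the dual factor at `K = 0`). -/
noncomputable def cind (k : ℕ) : ℝ := if k = 0 then 1 else 0

lemma uNL_tendsto {n k : ℕ} (h2 : k ≤ n) :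
    Tendsto (fun K => uNL n k K) atTop (𝓝 (cind k)) := by
  rcases Nat.eq_zero_or_pos k with rfl | hk
  · simp only [uNL_k0, cind, if_pos rfl]
    exact tendsto_const_nhds
  · have : cind k = 0 := by simp [cind, Nat.pos_iff_ne_zero.1 hk]
    rw [this, uNL_def]
    exact coshRatio_tendsto_zero (uNL_abs_lt hk h2)

lemma uNL_continuous (n k : ℕ) : Continuous (uNL n k) := by
  rw [uNL_def]
  exact coshRatio_continuous _ _

/-! ### Properties of `tanh` -/

lemma tanh_strictMono : StrictMono Real.tanh := by
  intro x y hxy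
  rw [Real.tanh_eq_sinh_div_cosh, Real.tanh_eq_sinh_div_cosh,
    div_lt_div_iff₀ (Real.cosh_pos _) (Real.cosh_pos _)]
  have h1 : sinh (x - y) < 0 := Real.sinh_neg_iff.2 (by linarith)
  have h2 := Real.sinh_sub x y
  nlinarith

lemma tanh_nonneg' {x : ℝ} (hx : 0 ≤ x) : 0 ≤ tanh x := by
  have := tanh_strictMono.monotone hx
  rwa [Real.tanh_zero] at this

lemma tanh_pos' {x : ℝ} (hx : 0 < x) : 0 < tanh x := by
  have := tanh_strictMono hx
  rwa [Real.tanh_zero] at this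

lemma tanh_eq_exp (x : ℝ) : tanh x = (1 - exp (-2 * x)) / (1 + exp (-2 * x)) := by
  have h1 : exp (-2 * x) = exp (-x) * exp (-x) := by
    rw [← Real.exp_add]; ring_nf
  have h2 : Real.exp x ≠ 0 := (Real.exp_pos x).ne'
  have h3 : Real.exp x * Real.exp (-x) = 1 := by
    rw [← Real.exp_add]; simp
  have h4 : (0 : ℝ) < 1 + exp (-2 * x) := by positivity
  rw [Real.tanh_eq_sinh_div_cosh, Real.sinh_eq, Real.cosh_eq, h1]
  rw [div_eq_div_iff (by positivity) (by positivity)]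
  nlinarith [Real.exp_pos (-x)]

lemma continuous_tanh' : Continuous Real.tanh := by
  have : Real.tanh = fun x => sinh x / cosh x := funext fun x => Real.tanh_eq_sinh_div_cosh x
  rw [this]
  exact Real.continuous_sinh.div Real.continuous_cosh fun x => (Real.cosh_pos x).ne'

lemma tendsto_tanh_atTop : Tendsto Real.tanh atTop (𝓝 1) := by
  have h : Tendsto (fun x : ℝ => exp (-2 * x)) atTop (𝓝 0) := by
    apply Real.tendsto_exp_atBot.comp
    exact (tendsto_const_mul_atBot_of_neg (by norm_num)).2 tendsto_id
  have h2 : Tendsto (fun x : ℝ => (1 - exp (-2 * x)) / (1 + exp (-2 * x))) atTop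
      (𝓝 ((1 - 0) / (1 + 0))) :=
    ((tendsto_const_nhds.sub h).div (tendsto_const_nhds.add h) (by norm_num))
  have h3 : Tendsto Real.tanh atTop (𝓝 ((1 - 0) / (1 + 0))) :=
    h2.congr fun x => (tanh_eq_exp x).symm
  norm_num at h3
  exact h3

end NishimoriAux

open NishimoriAux Set

section Main

variable {V : Type*} [Fintype V] [DecidableEq V] (G : SimpleGraph V) [DecidableRel G.Adj]
  (n : ℕ)

/-- The dual partition function as a polynomial in `t = tanh K`. -/
noncomputable def Vpoly : ℝ → ℝ := fun t =>
  ∑ S : V → Fin n → Bool, ∏ e ∈ G.edgeFinset, t ^ ex (edgeK n S e)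

lemma Vpoly_continuous : Continuous (Vpoly G n) :=
  continuous_finset_sum _ fun _ _ => continuous_finset_prod _ fun _ _ => continuous_pow _

lemma Vfun_eq (K : ℝ) : Vfun G n K = Vpoly G n (tanh K) := by
  rw [Vfun, Ztilde_eq]
  unfold Vpoly
  refine Finset.sum_congr rfl fun S _ => Finset.prod_congr rfl fun e _ => ?_
  exact uStarNL_eq _ _

lemma Ufun_eq (K : ℝ) :
    Ufun G n K = ∑ S : V → Fin n → Bool, ∏ e ∈ G.edgeFinset, uNL n (edgeK n S e) K := by
  rw [Ufun, Ztilde_eq]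

lemma Ufun_continuous : Continuous (Ufun G n) := by
  have : Ufun G n = fun K => ∑ S : V → Fin n → Bool, ∏ e ∈ G.edgeFinset,
      uNL n (edgeK n S e) K := funext fun K => Ufun_eq G n K
  rw [this]
  exact continuous_finset_sum _ fun S _ => continuous_finset_prod _ fun e _ =>
    (uNL_continuous n _)

lemma Vfun_continuous : Continuous (Vfun G n) := by
  have : Vfun G n = fun K => Vpoly G n (tanh K) := funext fun K => Vfun_eq G n K
  rw [this]
  exact (Vpoly_continuous G n).comp continuous_tanh'

variable {G n}

lemma Ufun_strictAntiOn (hn : 1 ≤ n) {i j : V} (hij : G.Adj i j) :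
    StrictAntiOn (Ufun G n) (Set.Ici 0) := by
  intro K1 hK1 K2 hK2 hlt
  rw [Ufun_eq, Ufun_eq]
  apply sum_lt G hn hij (w := fun k => uNL n k K2) (u := fun k => uNL n k K1)
  · intro k _; exact (uNL_pos n k K2).le
  · intro k hk; exact uNL_antitoneOn hk hK1 hK2 hlt.le
  · intro k _; exact uNL_pos n k K1
  · exact uNL_strictAntiOn hn le_rfl hK1 hK2 hlt

lemma Vfun_strictMonoOn (hn : 1 ≤ n) {i j : V} (hij : G.Adj i j) :
    StrictMonoOn (Vfun G n) (Set.Ici 0) := by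
  intro K1 hK1 K2 hK2 hlt
  have ht1 : 0 ≤ tanh K1 := tanh_nonneg' hK1
  have ht : tanh K1 < tanh K2 := tanh_strictMono hlt
  rw [Vfun, Vfun, Ztilde_eq, Ztilde_eq]
  simp only [uStarNL_eq]
  apply sum_lt G hn hij (w := fun k => tanh K1 ^ ex k) (u := fun k => tanh K2 ^ ex k)
  · intro k _; positivity
  · intro k _; exact pow_le_pow_left₀ ht1 ht.le _
  · intro k _
    have : 0 < tanh K2 := tanh_pos' (lt_of_le_of_lt hK1 hlt)
    positivity
  · exact pow_lt_pow_left₀ ht ht1 (by have := ex_pos hn; omega)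

lemma Ufun_tendsto_atTop (hn : 1 ≤ n) :
    Tendsto (Ufun G n) atTop
      (𝓝 (∑ S : V → Fin n → Bool, ∏ e ∈ G.edgeFinset, cind (edgeK n S e))) := by
  have : Ufun G n = fun K => ∑ S : V → Fin n → Bool, ∏ e ∈ G.edgeFinset,
      uNL n (edgeK n S e) K := funext fun K => Ufun_eq G n K
  rw [this]
  exact tendsto_finset_sum _ fun S _ => tendsto_finset_prod _ fun e _ =>
    uNL_tendsto (edgeK_le n S e)

end Main

set_option maxHeartbeats 1000000 in
/-- Theorem 2 of the paper (fixed-point statement): if `d : (0,∞) → (0,∞)` is the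
unique function with `V(K) = U(d(K))` for all `K > 0`, then there exists a unique
`K₀ > 0` with `d(K₀) = K₀`, and `K₀` is characterized by the equation
`U(K₀) = V(K₀)`. -/
theorem exists_unique_fixed_point {V : Type*} [Fintype V] [DecidableEq V]
    (G : SimpleGraph V) [DecidableRel G.Adj] (hG : G.Connected)
    (hE : G.edgeFinset.Nonempty) (n : ℕ) (hn : 1 ≤ n)
    (d : ℝ → ℝ) (hd_pos : ∀ K, 0 < K → 0 < d K)
    (hd : ∀ K, 0 < K → Vfun G n K = Ufun G n (d K)) :
    (∃! K₀ : ℝ, 0 < K₀ ∧ d K₀ = K₀) ∧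
      (∀ K, 0 < K → (d K = K ↔ Ufun G n K = Vfun G n K)) := by
  classical
  -- extract an edge
  obtain ⟨i, j, hij⟩ : ∃ i j, G.Adj i j := by
    obtain ⟨e, he⟩ := hE
    rw [SimpleGraph.mem_edgeFinset] at he
    revert he
    refine Sym2.ind (fun i j he => ⟨i, j, ?_⟩) e
    rwa [SimpleGraph.mem_edgeSet] at he
  -- monotonicity facts
  have hUanti : StrictAntiOn (Ufun G n) (Set.Ici 0) := Ufun_strictAntiOn hn hij
  have hVmono : StrictMonoOn (Vfun G n) (Set.Ici 0) := Vfun_strictMonoOn hn hij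
  set W : ℝ → ℝ := fun K => Ufun G n K - Vfun G n K with hWdef
  have hWanti : StrictAntiOn W (Set.Ici 0) := by
    intro a ha b hb hab
    have h1 := hUanti ha hb hab
    have h2 := hVmono ha hb hab
    simp only [hWdef]
    linarith
  have hWc : Continuous W := (Ufun_continuous G n).sub (Vfun_continuous G n)
  -- value at 0 is positive
  have hW0 : 0 < W 0 := by
    have hU0 : Ufun G n 0 = ∑ S : V → Fin n → Bool, ∏ e ∈ G.edgeFinset, (1 : ℝ) := by
      rw [Ufun_eq]
      exact Finset.sum_congr rfl fun S _ => Finset.prod_congr rfl fun e _ => uNL_zero n _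
    have hV0 : Vfun G n 0 =
        ∑ S : V → Fin n → Bool, ∏ e ∈ G.edgeFinset, ((0 : ℝ) ^ ex (edgeK n S e)) := by
      rw [Vfun_eq]
      unfold Vpoly
      simp [Real.tanh_zero]
    have key : (∑ S : V → Fin n → Bool, ∏ e ∈ G.edgeFinset, ((0 : ℝ) ^ ex (edgeK n S e))) <
        ∑ S : V → Fin n → Bool, ∏ e ∈ G.edgeFinset, (fun _ : ℕ => (1 : ℝ)) (edgeK n S e) := by
      apply sum_lt G hn hij (w := fun k => (0 : ℝ) ^ ex k) (u := fun _ : ℕ => (1 : ℝ))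
      · intro k _; positivity
      · intro k _
        rcases Nat.eq_zero_or_pos (ex k) with h | h
        · rw [h]; norm_num
        · rw [zero_pow (by omega)]; norm_num
      · intro k _; norm_num
      · rw [zero_pow (by have := ex_pos hn; omega)]; norm_num
    simp only [hWdef]
    rw [hU0, hV0]
    simpa using key
  -- limits at infinity
  have hUtop := Ufun_tendsto_atTop (G := G) hn
  have hVtop : Tendsto (Vfun G n) atTop (𝓝 (Vpoly G n 1)) := by
    have : Vfun G n = fun K => Vpoly G n (tanh K) := funext fun K => Vfun_eq G n K
    rw [this]
    exact ((Vpoly_continuous G n).tendsto 1).comp tendsto_tanh_atTop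
  have hLlt : (∑ S : V → Fin n → Bool, ∏ e ∈ G.edgeFinset, cind (edgeK n S e)) <
      Vpoly G n 1 := by
    have key : (∑ S : V → Fin n → Bool, ∏ e ∈ G.edgeFinset, cind (edgeK n S e)) <
        ∑ S : V → Fin n → Bool, ∏ e ∈ G.edgeFinset, (fun _ : ℕ => (1 : ℝ)) (edgeK n S e) := by
      apply sum_lt G hn hij (w := cind) (u := fun _ : ℕ => (1 : ℝ))
      · intro k _
        unfold cind; split <;> norm_num
      · intro k _
        unfold cind; split <;> norm_num
      · intro k _; norm_num
      · unfold cind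
        rw [if_neg (by omega)]
        norm_num
    have hv1 : Vpoly G n 1 =
        ∑ S : V → Fin n → Bool, ∏ e ∈ G.edgeFinset, (fun _ : ℕ => (1 : ℝ)) (edgeK n S e) := by
      unfold Vpoly
      simp
    rw [hv1]
    exact key
  have hWtop : Tendsto W atTop
      (𝓝 ((∑ S : V → Fin n → Bool, ∏ e ∈ G.edgeFinset, cind (edgeK n S e)) - Vpoly G n 1)) :=
    hUtop.sub hVtop
  -- find K1 > 0 with W K1 > 0
  have h1 : ∀ᶠ K in 𝓝 (0 : ℝ), 0 < W K :=
    (hWc.continuousAt (x := 0)).eventually_const_lt hW0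
  have h2 : ∀ᶠ K in 𝓝[>] (0 : ℝ), 0 < W K := h1.filter_mono nhdsWithin_le_nhds
  obtain ⟨K1, hK1W, hK1pos⟩ := (h2.and (eventually_mem_nhdsWithin (s := Set.Ioi 0))).exists
  rw [Set.mem_Ioi] at hK1pos
  -- find K2 > K1 with W K2 < 0
  have h3 : ∀ᶠ K in atTop, W K < 0 := hWtop.eventually_lt_const (by linarith)
  obtain ⟨K2, hK2W, hK12⟩ := (h3.and (eventually_gt_atTop K1)).exists
  -- intermediate value theorem
  have hIVT := intermediate_value_Icc' hK12.le hWc.continuousOn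
  obtain ⟨K0, hK0mem, hK0⟩ := hIVT (Set.mem_Icc.2 ⟨hK2W.le, hK1W.le⟩)
  have hK0pos : 0 < K0 := lt_of_lt_of_le hK1pos hK0mem.1
  have hUV0 : Ufun G n K0 = Vfun G n K0 := by
    have : Ufun G n K0 - Vfun G n K0 = 0 := hK0
    linarith
  -- the characterization
  have hiff : ∀ K, 0 < K → (d K = K ↔ Ufun G n K = Vfun G n K) := by
    intro K hK
    constructor
    · intro h
      have h2 := hd K hK
      rw [h] at h2
      exact h2.symm
    · intro h
      have h' : Ufun G n (d K) = Ufun G n K := by rw [← hd K hK, h]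
      exact hUanti.injOn (Set.mem_Ici.2 (hd_pos K hK).le) (Set.mem_Ici.2 hK.le) h'
  refine ⟨⟨K0, ⟨hK0pos, (hiff K0 hK0pos).2 hUV0⟩, ?_⟩, hiff⟩
  intro K' ⟨hK'pos, hK'fix⟩
  have hUV' : Ufun G n K' = Vfun G n K' := (hiff K' hK'pos).1 hK'fix
  have : W K' = W K0 := by
    simp only [hWdef]
    rw [hUV', hUV0]
    ring
  exact hWanti.injOn (Set.mem_Ici.2 hK'pos.le) (Set.mem_Ici.2 hK0pos.le) this
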